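/- arXiv:2101.12520 — 6 statements merged into one kernel-verified Lean document; each statement's English description precedes it below -/
import Mathlib

section
/- For all real numbers p ≥ 0, q ≥ 0 and ε > 0, the two-dimensional Lebesgue measure of the closed ε-neighborhood of the solid rectangle R = [0,p] × [0,q] in the Euclidean plane ℝ² equals p·q + 2(p+q)·ε + π·ε². -/
open MeasureTheory Metric Real intervalIntegral

/-- Distance from `t` to the interval `[0, r]`. -/
noncomputable def dd (r t : ℝ) : ℝ := max 0 (max (-t) (t - r))

lemma dd_nonneg (r t : ℝ) : 0 ≤ dd r t := le_max_left _ _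

lemma dd_cont (r : ℝ) : Continuous (dd r) := by unfold dd; fun_prop

lemma dd_le_iff {r t c : ℝ} (hc : 0 ≤ c) : dd r t ≤ c ↔ t ∈ Set.Icc (-c) (r + c) := by
  simp only [dd, max_le_iff, Set.mem_Icc]
  constructor
  · rintro ⟨-, h1, h2⟩; constructor <;> linarith
  · rintro ⟨h1, h2⟩; exact ⟨hc, by linarith, by linarith⟩

lemma dd_eq_neg {r t : ℝ} (hr : 0 ≤ r) (h : t ≤ 0) : dd r t = -t := by
  unfold dd
  have hin : max (-t) (t - r) = -t := max_eq_left (by linarith)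
  rw [hin, max_eq_right (by linarith)]

lemma dd_eq_zero {r t : ℝ} (h0 : 0 ≤ t) (h1 : t ≤ r) : dd r t = 0 := by
  unfold dd
  rw [max_eq_left (max_le (by linarith) (by linarith))]

lemma dd_eq_sub {r t : ℝ} (hr : 0 ≤ r) (h : r ≤ t) : dd r t = t - r := by
  unfold dd
  have hin : max (-t) (t - r) = t - r := max_eq_right (by linarith)
  rw [hin, max_eq_right (by linarith)]

lemma dd_spec (r t : ℝ) (hr : 0 ≤ r) : ∃ s, s ∈ Set.Icc 0 r ∧ (t - s) ^ 2 = dd r t ^ 2 := by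
  rcases le_total t 0 with h | h
  · exact ⟨0, ⟨le_refl _, hr⟩, by rw [dd_eq_neg hr h]; ring⟩
  · rcases le_total t r with h2 | h2
    · exact ⟨t, ⟨h, h2⟩, by rw [dd_eq_zero h h2]; ring⟩
    · exact ⟨r, ⟨hr, le_refl r⟩, by rw [dd_eq_sub hr h2]⟩

lemma dd_sq_le (r t s : ℝ) (hs : s ∈ Set.Icc 0 r) : dd r t ^ 2 ≤ (t - s) ^ 2 := by
  have h1 : dd r t ≤ |t - s| := by
    refine max_le (abs_nonneg _) (max_le ?_ ?_)
    · calc -t ≤ s - t := by linarith [hs.1]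
        _ ≤ |s - t| := le_abs_self _
        _ = |t - s| := abs_sub_comm _ _
    · calc t - r ≤ t - s := by linarith [hs.2]
        _ ≤ |t - s| := le_abs_self _
  calc dd r t ^ 2 ≤ |t - s| ^ 2 := pow_le_pow_left₀ (dd_nonneg r t) h1 2
    _ = (t - s) ^ 2 := sq_abs _

lemma cthick_eq (p q ε : ℝ) (hp : 0 ≤ p) (hq : 0 ≤ q) (hε : 0 < ε) :
    Metric.cthickening ε {x : EuclideanSpace ℝ (Fin 2) | x 0 ∈ Set.Icc 0 p ∧ x 1 ∈ Set.Icc 0 q}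
    = {x : EuclideanSpace ℝ (Fin 2) | dd p (x 0) ^ 2 + dd q (x 1) ^ 2 ≤ ε ^ 2} := by
  set R : Set (EuclideanSpace ℝ (Fin 2)) :=
    {x | x 0 ∈ Set.Icc 0 p ∧ x 1 ∈ Set.Icc 0 q} with hR
  have hne : R.Nonempty := ⟨!₂[0, 0], by
    constructor <;> simp [Set.mem_Icc] <;> assumption⟩
  ext x
  simp only [Set.mem_setOf_eq]
  constructor
  · intro hx
    have hεx : Metric.infDist x R ≤ ε := by
      rw [Metric.mem_cthickening_iff] at hx
      calc Metric.infDist x R = (EMetric.infEdist x R).toReal := rfl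
        _ ≤ (ENNReal.ofReal ε).toReal := ENNReal.toReal_mono ENNReal.ofReal_ne_top hx
        _ = ε := ENNReal.toReal_ofReal hε.le
    by_contra hcon
    push_neg at hcon
    have hlt : Metric.infDist x R < Real.sqrt (dd p (x 0) ^ 2 + dd q (x 1) ^ 2) := by
      refine lt_of_le_of_lt hεx ?_
      have h : ε = Real.sqrt (ε ^ 2) := (Real.sqrt_sq hε.le).symm
      rw [h]
      exact Real.sqrt_lt_sqrt (sq_nonneg _) hcon
    obtain ⟨y, hy, hdy⟩ := (Metric.infDist_lt_iff hne).mp hlt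
    have hge : Real.sqrt (dd p (x 0) ^ 2 + dd q (x 1) ^ 2) ≤ dist x y := by
      rw [EuclideanSpace.dist_eq]
      apply Real.sqrt_le_sqrt
      rw [Fin.sum_univ_two]
      have h0 := dd_sq_le p (x 0) (y 0) hy.1
      have h1 := dd_sq_le q (x 1) (y 1) hy.2
      have e0 : dist (x 0) (y 0) ^ 2 = (x 0 - y 0) ^ 2 := by rw [Real.dist_eq, sq_abs]
      have e1 : dist (x 1) (y 1) ^ 2 = (x 1 - y 1) ^ 2 := by rw [Real.dist_eq, sq_abs]
      rw [e0, e1]; linarith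
    linarith
  · intro hx
    obtain ⟨s0, hs0, he0⟩ := dd_spec p (x 0) hp
    obtain ⟨s1, hs1, he1⟩ := dd_spec q (x 1) hq
    refine Metric.mem_cthickening_of_dist_le x !₂[s0, s1] ε R
      ⟨by simpa using hs0, by simpa using hs1⟩ ?_
    rw [EuclideanSpace.dist_eq, Fin.sum_univ_two]
    have e0 : dist (x 0) ((!₂[s0, s1] : EuclideanSpace ℝ (Fin 2)) 0) ^ 2 = dd p (x 0) ^ 2 := by
      rw [Real.dist_eq, sq_abs]; simpa using he0
    have e1 : dist (x 1) ((!₂[s0, s1] : EuclideanSpace ℝ (Fin 2)) 1) ^ 2 = dd q (x 1) ^ 2 := by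
      rw [Real.dist_eq, sq_abs]; simpa using he1
    rw [e0, e1]
    calc Real.sqrt (dd p (x 0) ^ 2 + dd q (x 1) ^ 2) ≤ Real.sqrt (ε ^ 2) :=
          Real.sqrt_le_sqrt hx
      _ = ε := Real.sqrt_sq hε.le

lemma cont_sqrt (ε : ℝ) : Continuous (fun x : ℝ => Real.sqrt (ε ^ 2 - x ^ 2)) :=
  Real.continuous_sqrt.comp (by continuity)

lemma int_sqrt_full (ε : ℝ) (hε : 0 < ε) :
    ∫ x in (-ε)..ε, Real.sqrt (ε ^ 2 - x ^ 2) = π * ε ^ 2 / 2 := by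
  have hkey : ∀ x : ℝ, Real.sqrt (ε ^ 2 - x ^ 2) = ε * Real.sqrt (1 - (ε⁻¹ * x) ^ 2) := by
    intro x
    have h1 : ε ^ 2 - x ^ 2 = ε ^ 2 * (1 - (ε⁻¹ * x) ^ 2) := by field_simp
    rw [h1, Real.sqrt_mul (sq_nonneg ε), Real.sqrt_sq hε.le]
  simp_rw [hkey]
  rw [intervalIntegral.integral_const_mul]
  rw [intervalIntegral.integral_comp_mul_left (fun x => Real.sqrt (1 - x ^ 2))
    (inv_ne_zero hε.ne')]
  rw [inv_mul_cancel₀ hε.ne', show ε⁻¹ * (-ε) = -1 by field_simp]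
  rw [integral_sqrt_one_sub_sq]
  rw [inv_inv, smul_eq_mul]
  ring

lemma int_sqrt_left (ε : ℝ) (hε : 0 < ε) :
    ∫ x in (-ε)..0, Real.sqrt (ε ^ 2 - x ^ 2) = π * ε ^ 2 / 4 := by
  have hint : ∀ a b : ℝ, IntervalIntegrable (fun x => Real.sqrt (ε ^ 2 - x ^ 2)) volume a b :=
    fun a b => (cont_sqrt ε).intervalIntegrable a b
  have heven : ∫ x in (0:ℝ)..ε, Real.sqrt (ε ^ 2 - x ^ 2)
      = ∫ x in (-ε)..0, Real.sqrt (ε ^ 2 - x ^ 2) := by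
    have h := intervalIntegral.integral_comp_neg (a := (0:ℝ)) (b := ε)
      (fun x => Real.sqrt (ε ^ 2 - x ^ 2))
    simp only [neg_sq, neg_zero] at h
    exact h
  have hsplit := intervalIntegral.integral_add_adjacent_intervals (hint (-ε) 0) (hint 0 ε)
  rw [int_sqrt_full ε hε] at hsplit
  linarith [heven, hsplit]

lemma int_sqrt_right (ε : ℝ) (hε : 0 < ε) :
    ∫ x in (0:ℝ)..ε, Real.sqrt (ε ^ 2 - x ^ 2) = π * ε ^ 2 / 4 := by
  have hint : ∀ a b : ℝ, IntervalIntegrable (fun x => Real.sqrt (ε ^ 2 - x ^ 2)) volume a b :=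
    fun a b => (cont_sqrt ε).intervalIntegrable a b
  have hsplit := intervalIntegral.integral_add_adjacent_intervals (hint (-ε) 0) (hint 0 ε)
  rw [int_sqrt_full ε hε, int_sqrt_left ε hε] at hsplit
  linarith

lemma main_int (p q ε : ℝ) (hp : 0 ≤ p) (hq : 0 ≤ q) (hε : 0 < ε) :
    ∫ x in (-ε)..(p + ε), (q + 2 * Real.sqrt (ε ^ 2 - dd p x ^ 2))
      = p * q + 2 * (p + q) * ε + π * ε ^ 2 := by
  have hgc : Continuous (fun x => q + 2 * Real.sqrt (ε ^ 2 - dd p x ^ 2)) :=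
    continuous_const.add (continuous_const.mul
      (Real.continuous_sqrt.comp (continuous_const.sub ((dd_cont p).pow 2))))
  have hii : ∀ a b : ℝ, IntervalIntegrable
      (fun x => q + 2 * Real.sqrt (ε ^ 2 - dd p x ^ 2)) volume a b :=
    fun a b => hgc.intervalIntegrable a b
  have h1 : ∫ x in (-ε)..0, (q + 2 * Real.sqrt (ε ^ 2 - dd p x ^ 2))
      = q * ε + π * ε ^ 2 / 2 := by
    rw [intervalIntegral.integral_congr
      (g := fun x => q + 2 * Real.sqrt (ε ^ 2 - x ^ 2)) ?_]
    · rw [intervalIntegral.integral_add (g := fun x => 2 * Real.sqrt (ε ^ 2 - x ^ 2)) (intervalIntegrable_const)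
        ((continuous_const.mul (cont_sqrt ε)).intervalIntegrable _ _),
        intervalIntegral.integral_const, intervalIntegral.integral_const_mul,
        int_sqrt_left ε hε]
      simp; ring
    · intro x hx
      rw [Set.uIcc_of_le (by linarith)] at hx
      simp only
      rw [dd_eq_neg hp hx.2, neg_sq]
  have h2 : ∫ x in (0:ℝ)..p, (q + 2 * Real.sqrt (ε ^ 2 - dd p x ^ 2))
      = p * q + 2 * p * ε := by
    rw [intervalIntegral.integral_congr (g := fun _ => q + 2 * ε) ?_]
    · rw [intervalIntegral.integral_const]; simp; ring
    · intro x hx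
      rw [Set.uIcc_of_le hp] at hx
      simp only
      rw [dd_eq_zero hx.1 hx.2]
      rw [show ε ^ 2 - 0 ^ 2 = ε ^ 2 by ring, Real.sqrt_sq hε.le]
  have h3 : ∫ x in p..(p + ε), (q + 2 * Real.sqrt (ε ^ 2 - dd p x ^ 2))
      = q * ε + π * ε ^ 2 / 2 := by
    rw [intervalIntegral.integral_congr
      (g := fun x => q + 2 * Real.sqrt (ε ^ 2 - (x - p) ^ 2)) ?_]
    · have hc2 : Continuous fun x : ℝ => 2 * Real.sqrt (ε ^ 2 - (x - p) ^ 2) :=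
        continuous_const.mul (Real.continuous_sqrt.comp (by continuity))
      rw [intervalIntegral.integral_add (intervalIntegrable_const)
        (hc2.intervalIntegrable _ _),
        intervalIntegral.integral_const, intervalIntegral.integral_const_mul]
      have h := intervalIntegral.integral_comp_sub_right
        (a := p) (b := p + ε) (fun x => Real.sqrt (ε ^ 2 - x ^ 2)) p
      simp only [sub_self, add_sub_cancel_left] at h
      rw [h, int_sqrt_right ε hε]
      simp; ring
    · intro x hx
      rw [Set.uIcc_of_le (by linarith)] at hx
      simp only
      rw [dd_eq_sub hp hx.1]
  have hs1 := intervalIntegral.integral_add_adjacent_intervals (hii 0 p) (hii p (p + ε))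
  have hs2 := intervalIntegral.integral_add_adjacent_intervals (hii (-ε) 0) (hii 0 (p + ε))
  rw [← hs2, ← hs1, h1, h2, h3]
  ring

lemma vol_prod (p q ε : ℝ) (hp : 0 ≤ p) (hq : 0 ≤ q) (hε : 0 < ε) :
    volume {z : ℝ × ℝ | dd p z.1 ^ 2 + dd q z.2 ^ 2 ≤ ε ^ 2}
      = ENNReal.ofReal (p * q + 2 * (p + q) * ε + π * ε ^ 2) := by
  have hT : MeasurableSet {z : ℝ × ℝ | dd p z.1 ^ 2 + dd q z.2 ^ 2 ≤ ε ^ 2} := by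
    apply (isClosed_le ?_ continuous_const).measurableSet
    exact (((dd_cont p).comp continuous_fst).pow 2).add (((dd_cont q).comp continuous_snd).pow 2)
  rw [Measure.volume_eq_prod, Measure.prod_apply hT]
  have hsec : ∀ x : ℝ, volume (Prod.mk x ⁻¹' {z : ℝ × ℝ | dd p z.1 ^ 2 + dd q z.2 ^ 2 ≤ ε ^ 2})
      = (Set.Icc (-ε) (p + ε)).indicator
          (fun x => ENNReal.ofReal (q + 2 * Real.sqrt (ε ^ 2 - dd p x ^ 2))) x := by
    intro x
    rcases le_or_gt (dd p x) ε with hx | hx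
    · have hmem : x ∈ Set.Icc (-ε) (p + ε) := (dd_le_iff hε.le).mp hx
      rw [Set.indicator_of_mem hmem]
      have hnn : 0 ≤ ε ^ 2 - dd p x ^ 2 := by nlinarith [dd_nonneg p x]
      set c := Real.sqrt (ε ^ 2 - dd p x ^ 2) with hc
      have hc0 : 0 ≤ c := Real.sqrt_nonneg _
      have hcsq : c ^ 2 = ε ^ 2 - dd p x ^ 2 := Real.sq_sqrt hnn
      have hs : (Prod.mk x ⁻¹' {z : ℝ × ℝ | dd p z.1 ^ 2 + dd q z.2 ^ 2 ≤ ε ^ 2})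
          = Set.Icc (-c) (q + c) := by
        ext y
        simp only [Set.mem_preimage, Set.mem_setOf_eq]
        rw [← dd_le_iff hc0]
        constructor
        · intro h; nlinarith [dd_nonneg q y]
        · intro h; nlinarith [dd_nonneg q y]
      rw [hs, Real.volume_Icc]
      congr 1; ring
    · rw [Set.indicator_of_notMem (by rw [← dd_le_iff hε.le]; exact not_le.mpr hx)]
      have hs : (Prod.mk x ⁻¹' {z : ℝ × ℝ | dd p z.1 ^ 2 + dd q z.2 ^ 2 ≤ ε ^ 2})
          = (∅ : Set ℝ) := by
        ext y
        simp only [Set.mem_preimage, Set.mem_setOf_eq, Set.mem_empty_iff_false, iff_false, not_le]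
        nlinarith [dd_nonneg q y, hε.le]
      rw [hs, measure_empty]
  simp_rw [hsec]
  rw [lintegral_indicator measurableSet_Icc]
  have hgc : Continuous (fun x => q + 2 * Real.sqrt (ε ^ 2 - dd p x ^ 2)) :=
    continuous_const.add (continuous_const.mul
      (Real.continuous_sqrt.comp (continuous_const.sub ((dd_cont p).pow 2))))
  have hInt : IntegrableOn (fun x => q + 2 * Real.sqrt (ε ^ 2 - dd p x ^ 2))
      (Set.Icc (-ε) (p + ε)) volume := hgc.integrableOn_Icc
  rw [← MeasureTheory.ofReal_integral_eq_lintegral_ofReal hInt]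
  · congr 1
    have hle : (-ε : ℝ) ≤ p + ε := by linarith
    rw [MeasureTheory.integral_Icc_eq_integral_Ioc,
      ← intervalIntegral.integral_of_le hle]
    exact main_int p q ε hp hq hε
  · filter_upwards with x
    have := Real.sqrt_nonneg (ε ^ 2 - dd p x ^ 2)
    positivity

/-- The 2D Lebesgue measure of the closed ε-neighborhood of the solid rectangle
`[0,p] × [0,q]` in the Euclidean plane equals `p·q + 2(p+q)·ε + π·ε²`. -/
theorem rect_cthickening_volume (p q ε : ℝ) (hp : 0 ≤ p) (hq : 0 ≤ q) (hε : 0 < ε) :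
    volume (Metric.cthickening ε
      {x : EuclideanSpace ℝ (Fin 2) | x 0 ∈ Set.Icc 0 p ∧ x 1 ∈ Set.Icc 0 q}) =
    ENNReal.ofReal (p * q + 2 * (p + q) * ε + Real.pi * ε ^ 2) := by
  rw [cthick_eq p q ε hp hq hε]
  have hT : MeasurableSet {z : ℝ × ℝ | dd p z.1 ^ 2 + dd q z.2 ^ 2 ≤ ε ^ 2} := by
    apply (isClosed_le ?_ continuous_const).measurableSet
    exact (((dd_cont p).comp continuous_fst).pow 2).add (((dd_cont q).comp continuous_snd).pow 2)
  have hmp := (volume_preserving_finTwoArrow ℝ).comp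
    (EuclideanSpace.volume_preserving_symm_measurableEquiv_toLp (Fin 2))
  have hpre : (⇑(MeasurableEquiv.finTwoArrow) ∘ ⇑(MeasurableEquiv.toLp 2 (Fin 2 → ℝ)).symm) ⁻¹'
      {z : ℝ × ℝ | dd p z.1 ^ 2 + dd q z.2 ^ 2 ≤ ε ^ 2}
      = {x : EuclideanSpace ℝ (Fin 2) | dd p (x 0) ^ 2 + dd q (x 1) ^ 2 ≤ ε ^ 2} := rfl
  rw [← hpre, hmp.measure_preimage hT.nullMeasurableSet]
  exact vol_prod p q ε hp hq hε
end

section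
/- Let G_c > 0, h > 0 and let n ≥ 1 be an integer. The function E(ε) = (G_c/(2ε))·(n h² + 2(n+1) h ε + π ε²) on (0,∞) attains its global minimum at the unique point ε_h = h·√(n/π), and the minimum value is E(ε_h) = G_c h (1 + n + √(π n)). -/
/-- The EE fracture energy `E(ε) = (G_c/(2ε))·(n h² + 2(n+1) h ε + π ε²)` on `(0,∞)`
attains its global minimum at the unique point `ε_h = h·√(n/π)`, with minimum value
`E(ε_h) = G_c h (1 + n + √(π n))`. -/
theorem EE_energy_min (Gc h : ℝ) (n : ℕ) (hGc : 0 < Gc) (hh : 0 < h) (hn : 1 ≤ n)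
    (E : ℝ → ℝ)
    (hE : ∀ ε : ℝ, E ε =
      Gc / (2 * ε) * ((n : ℝ) * h ^ 2 + 2 * ((n : ℝ) + 1) * h * ε + Real.pi * ε ^ 2))
    (εh : ℝ) (hεh : εh = h * Real.sqrt ((n : ℝ) / Real.pi)) :
    εh ∈ Set.Ioi (0 : ℝ) ∧
    (∀ ε ∈ Set.Ioi (0 : ℝ), E εh ≤ E ε) ∧
    (∀ ε ∈ Set.Ioi (0 : ℝ), E ε = E εh → ε = εh) ∧
    E εh = Gc * h * (1 + (n : ℝ) + Real.sqrt (Real.pi * (n : ℝ))) := by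
  have hπ := Real.pi_pos
  have hn' : (0 : ℝ) < (n : ℝ) := by exact_mod_cast Nat.lt_of_lt_of_le Nat.zero_lt_one hn
  set a := Real.sqrt Real.pi with hadef
  set b := Real.sqrt (n : ℝ) with hbdef
  have ha : 0 < a := Real.sqrt_pos.mpr hπ
  have hb : 0 < b := Real.sqrt_pos.mpr hn'
  have ha2 : a ^ 2 = Real.pi := Real.sq_sqrt hπ.le
  have hb2 : b ^ 2 = (n : ℝ) := Real.sq_sqrt hn'.le
  have hdiv : Real.sqrt ((n : ℝ) / Real.pi) = b / a := Real.sqrt_div hn'.le _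
  have hmul : Real.sqrt (Real.pi * (n : ℝ)) = a * b := Real.sqrt_mul hπ.le _
  have hεh' : εh = h * b / a := by rw [hεh, hdiv]; ring
  have hεh0 : 0 < εh := by rw [hεh']; positivity
  have hval : E εh = Gc * h * (1 + (n : ℝ) + Real.sqrt (Real.pi * (n : ℝ))) := by
    rw [hE, hεh', hmul, ← ha2, ← hb2]
    field_simp
    ring
  have key : ∀ ε : ℝ, 0 < ε → E ε - E εh = Gc / (2 * ε) * (a * ε - b * h) ^ 2 := by
    intro ε hε
    rw [hE, hval, hmul, ← ha2, ← hb2]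
    field_simp
    ring
  refine ⟨hεh0, ?_, ?_, hval⟩
  · intro ε hε
    have hε' : (0:ℝ) < ε := hε
    have h1 := key ε hε'
    have h2 : 0 ≤ Gc / (2 * ε) * (a * ε - b * h) ^ 2 := by positivity
    linarith
  · intro ε hε heq
    have hε' : (0:ℝ) < ε := hε
    have h1 := key ε hε'
    rw [heq, sub_self] at h1
    have h2 : (a * ε - b * h) ^ 2 = 0 := by
      by_contra hne
      have : 0 < (a * ε - b * h) ^ 2 := lt_of_le_of_ne (sq_nonneg _) (Ne.symm hne)
      have hpos : 0 < Gc / (2 * ε) := by positivity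
      nlinarith
    have h3 : a * ε = b * h := by
      have := pow_eq_zero_iff (n := 2) (by norm_num) |>.mp h2.symm.symm
      linarith [sub_eq_zero.mp this]
    rw [hεh']
    field_simp
    linarith
end

section
/- Let a > 0 and G_c > 0, and for h > 0 define F(h) = G_c·h·(1 + ⌈2a/h⌉ + √(π·⌈2a/h⌉)). Then there exist constants C > 0 and h₀ > 0 such that for all 0 < h ≤ h₀, |F(h) − 2a·G_c − G_c·√(2π a h)| ≤ C·h; i.e., F(h) = G_c·2a + G_c·√(2π a h) + O(h) as h → 0. -/
/-!
Write `n = ⌈2a/h⌉`, so that `2a ≤ n h < 2a + h`. Then `F(h)/G_c - 2a - √(2π a h)` is the sum of three terms: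
`h`, the rounding error `n h - 2a ∈ [0, h)`, and `h √(π n) - √(2π a h)`. Since `h √(π n) = √(π h · n h)`
lies between `√(2π a h)` and `√(2π a h + π h²) ≤ √(2π a h) + √π h`, the total error is in `[h, (2 + √π) h]`.
-/

open Real

theorem le_ceil_div_mul (t : ℝ) {h : ℝ} (hh : 0 < h) : t ≤ ⌈t / h⌉ * h :=
  (div_le_iff₀ hh).mp (Int.le_ceil _)

theorem ceil_div_mul_lt (t : ℝ) {h : ℝ} (hh : 0 < h) : (⌈t / h⌉ : ℝ) * h < t + h := by
  have := mul_lt_mul_of_pos_right (Int.ceil_lt_add_one (t / h)) hh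
  rwa [add_mul, div_mul_cancel₀ _ hh.ne', one_mul] at this

theorem Real.sqrt_add_le_add_sqrt {x y : ℝ} (hx : 0 ≤ x) (hy : 0 ≤ y) : √(x + y) ≤ √x + √y := by
  rw [sqrt_le_left (by positivity), add_sq, sq_sqrt hx, sq_sqrt hy]
  nlinarith [sqrt_nonneg x, sqrt_nonneg y, mul_nonneg (sqrt_nonneg x) (sqrt_nonneg y)]

theorem mul_sqrt_pi_mul_ceil_eq (t : ℝ) {h : ℝ} (hh : 0 < h) :
    h * √(π * ⌈t / h⌉) = √(π * h * (⌈t / h⌉ * h)) := by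
  rw [show π * h * (⌈t / h⌉ * h) = h ^ 2 * (π * ⌈t / h⌉) by ring,
    sqrt_mul (sq_nonneg h), sqrt_sq hh.le]

theorem sqrt_le_mul_sqrt_pi_mul_ceil {a h : ℝ} (hh : 0 < h) :
    √(2 * π * a * h) ≤ h * √(π * ⌈2 * a / h⌉) := by
  rw [mul_sqrt_pi_mul_ceil_eq _ hh]
  have := le_ceil_div_mul (2 * a) hh
  apply sqrt_le_sqrt
  calc 2 * π * a * h = π * h * (2 * a) := by ring
    _ ≤ π * h * (⌈2 * a / h⌉ * h) := by gcongr

theorem mul_sqrt_pi_mul_ceil_le {a h : ℝ} (ha : 0 ≤ a) (hh : 0 < h) :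
    h * √(π * ⌈2 * a / h⌉) ≤ √(2 * π * a * h) + √π * h := by
  have := ceil_div_mul_lt (2 * a) hh
  calc h * √(π * ⌈2 * a / h⌉) = √(π * h * (⌈2 * a / h⌉ * h)) := mul_sqrt_pi_mul_ceil_eq _ hh
    _ ≤ √(π * h * (2 * a + h)) := by gcongr
    _ = √(2 * π * a * h + π * h ^ 2) := by ring_nf
    _ ≤ √(2 * π * a * h) + √(π * h ^ 2) := sqrt_add_le_add_sqrt (by positivity) (by positivity)
    _ = √(2 * π * a * h) + √π * h := by rw [sqrt_mul pi_pos.le, sqrt_sq hh.le]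

theorem abs_ceil_energy_sub_le {a h : ℝ} (ha : 0 ≤ a) (hh : 0 < h) :
    |h * (1 + ⌈2 * a / h⌉ + √(π * ⌈2 * a / h⌉)) - 2 * a - √(2 * π * a * h)| ≤ (2 + √π) * h := by
  have hlow := le_ceil_div_mul (2 * a) hh
  have hup := ceil_div_mul_lt (2 * a) hh
  have hsqrt_low := sqrt_le_mul_sqrt_pi_mul_ceil (a := a) hh
  have hsqrt_up := mul_sqrt_pi_mul_ceil_le ha hh
  rw [abs_le]
  constructor <;> nlinarith

/-- Asymptotics of the optimal EE inelastic energy: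
`F(h) = G_c h (1 + ⌈2a/h⌉ + √(π⌈2a/h⌉)) = 2a·G_c + G_c·√(2πah) + O(h)` as `h → 0`. -/
theorem optimal_energy_asymptotics (a Gc : ℝ) (ha : 0 < a) (hGc : 0 < Gc) :
    ∃ C > (0 : ℝ), ∃ h₀ > (0 : ℝ), ∀ h : ℝ, 0 < h → h ≤ h₀ →
      |Gc * h * (1 + (⌈2 * a / h⌉ : ℝ) + Real.sqrt (Real.pi * (⌈2 * a / h⌉ : ℝ)))
          - 2 * a * Gc - Gc * Real.sqrt (2 * Real.pi * a * h)| ≤ C * h := by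
  refine ⟨Gc * (2 + √π), by positivity, 1, one_pos, fun h hh _ => ?_⟩
  calc _ = |Gc| * |h * (1 + ⌈2 * a / h⌉ + √(π * ⌈2 * a / h⌉)) - 2 * a - √(2 * π * a * h)| := by
        rw [← abs_mul]; ring_nf
    _ ≤ Gc * ((2 + √π) * h) := by
        rw [abs_of_pos hGc]; gcongr; exact abs_ceil_energy_sub_le ha.le hh
    _ = Gc * (2 + √π) * h := by ring
end

section
/- Let a > 0 and G_c > 0, and for h > 0 define F(h) = G_c·h·(1 + ⌈2a/h⌉ + √(π·⌈2a/h⌉)). Then F(h) → 2a·G_c as h → 0⁺; i.e., the optimal EE fracture energy converges to the Griffith fracture energy G_c·2a of a crack of length 2a. -/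
open Filter Set

/-- The optimal EE fracture energy `F(h) = G_c h (1 + ⌈2a/h⌉ + √(π⌈2a/h⌉))` converges to
the Griffith fracture energy `2a·G_c` as `h → 0⁺`. -/
theorem optimal_energy_limit (a Gc : ℝ) (ha : 0 < a) (hGc : 0 < Gc) :
    Filter.Tendsto
      (fun h : ℝ =>
        Gc * h * (1 + (⌈2 * a / h⌉ : ℝ) + Real.sqrt (Real.pi * (⌈2 * a / h⌉ : ℝ))))
      (nhdsWithin 0 (Set.Ioi 0)) (nhds (2 * a * Gc)) := by
  have hmem : ∀ᶠ h in nhdsWithin (0:ℝ) (Set.Ioi 0), (0:ℝ) < h :=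
    eventually_nhdsWithin_of_forall (fun h hh => hh)
  have h0 : Tendsto (fun h : ℝ => h) (nhdsWithin 0 (Set.Ioi 0)) (nhds 0) :=
    tendsto_id.mono_left nhdsWithin_le_nhds
  -- h * ⌈2a/h⌉ → 2a
  have T1 : Tendsto (fun h : ℝ => h * (⌈2 * a / h⌉ : ℝ))
      (nhdsWithin 0 (Set.Ioi 0)) (nhds (2 * a)) := by
    apply tendsto_of_tendsto_of_tendsto_of_le_of_le' (g := fun _ : ℝ => 2 * a)
      (h := fun h : ℝ => 2 * a + h) tendsto_const_nhds
    · simpa using (tendsto_const_nhds (x := 2 * a)).add h0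
    · filter_upwards [hmem] with h hh
      have h1 : 2 * a / h ≤ (⌈2 * a / h⌉ : ℝ) := Int.le_ceil _
      have : h * (2 * a / h) = 2 * a := by field_simp
      nlinarith
    · filter_upwards [hmem] with h hh
      have h2 : (⌈2 * a / h⌉ : ℝ) < 2 * a / h + 1 := Int.ceil_lt_add_one _
      have he : h * (2 * a / h + 1) = 2 * a + h := by field_simp
      nlinarith
  -- h * √(π ⌈2a/h⌉) → 0
  have T2 : Tendsto (fun h : ℝ => h * Real.sqrt (Real.pi * (⌈2 * a / h⌉ : ℝ)))
      (nhdsWithin 0 (Set.Ioi 0)) (nhds 0) := by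
    have Tin : Tendsto (fun h : ℝ => h ^ 2 * (Real.pi * (⌈2 * a / h⌉ : ℝ)))
        (nhdsWithin 0 (Set.Ioi 0)) (nhds 0) := by
      have := (h0.mul ((tendsto_const_nhds (x := Real.pi)).mul T1))
      have heq : ∀ h : ℝ, h ^ 2 * (Real.pi * (⌈2 * a / h⌉ : ℝ))
          = h * (Real.pi * (h * (⌈2 * a / h⌉ : ℝ))) := fun h => by ring
      simpa [heq] using this
    have Ts : Tendsto (fun h : ℝ => Real.sqrt (h ^ 2 * (Real.pi * (⌈2 * a / h⌉ : ℝ))))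
        (nhdsWithin 0 (Set.Ioi 0)) (nhds 0) := by
      have := (Real.continuous_sqrt.tendsto 0).comp Tin
      simpa [Function.comp_def] using this
    refine Ts.congr' ?_
    filter_upwards [hmem] with h hh
    rw [Real.sqrt_mul (sq_nonneg h), Real.sqrt_sq hh.le]
  have A : Tendsto (fun h : ℝ => Gc * h) (nhdsWithin 0 (Set.Ioi 0)) (nhds (Gc * 0)) :=
    tendsto_const_nhds.mul h0
  have B : Tendsto (fun h : ℝ => Gc * (h * (⌈2 * a / h⌉ : ℝ)))
      (nhdsWithin 0 (Set.Ioi 0)) (nhds (Gc * (2 * a))) := tendsto_const_nhds.mul T1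
  have C : Tendsto (fun h : ℝ => Gc * (h * Real.sqrt (Real.pi * (⌈2 * a / h⌉ : ℝ))))
      (nhdsWithin 0 (Set.Ioi 0)) (nhds (Gc * 0)) := tendsto_const_nhds.mul T2
  have := (A.add B).add C
  have heq : ∀ h : ℝ,
      Gc * h + Gc * (h * (⌈2 * a / h⌉ : ℝ)) + Gc * (h * Real.sqrt (Real.pi * (⌈2 * a / h⌉ : ℝ)))
        = Gc * h * (1 + (⌈2 * a / h⌉ : ℝ) + Real.sqrt (Real.pi * (⌈2 * a / h⌉ : ℝ))) :=
    fun h => by ring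
  have hval : Gc * 0 + Gc * (2 * a) + Gc * 0 = 2 * a * Gc := by ring
  rw [hval] at this
  exact this.congr heq
end

section
/- Let a > 0 and G_c > 0, define F(h) = G_c·h·(1 + ⌈2a/h⌉ + √(π·⌈2a/h⌉)) for h > 0, and set λ = √2/(√2 − 1). Then there exist constants C > 0 and h₀ > 0 such that for all 0 < h ≤ h₀, |λ·F(h) + (1 − λ)·F(2h) − 2a·G_c| ≤ C·h; i.e., the Richardson-extrapolated EE fracture energy E_{EE+RE,h} = λ F(h) + (1−λ) F(2h) equals G_c·2a + O(h), so extrapolation removes the O(h^{1/2}) error term. -/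
/-!
Since `h⌈2a/h⌉` lies in `[2a, 2a + h)`, the energy expands as
`F(h)/G_c = 2a + √(2πa)·√h + O(h)`. The weight `λ = √2/(√2 - 1) = 2 + √2` is exactly the one
with `λ√h + (1 - λ)√(2h) = 0`, so the extrapolation cancels the `√h` term and leaves `O(h)`.
-/

open Real

lemma Real.sqrt_sub_sqrt_le_sqrt_sub {x y : ℝ} (hyx : y ≤ x) : √x - √y ≤ √(x - y) := by
  rcases le_total y 0 with hy | hy
  · rw [sqrt_eq_zero'.mpr hy, sub_zero]
    exact sqrt_le_sqrt (by linarith)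
  · have hsq : x ≤ (√y + √(x - y)) ^ 2 := by
      nlinarith [sq_sqrt hy, sq_sqrt (sub_nonneg.mpr hyx), sqrt_nonneg y, sqrt_nonneg (x - y)]
    linarith [(sqrt_le_left (by positivity)).mpr hsq]

lemma Int.le_mul_ceil_div (x : ℝ) {h : ℝ} (hh : 0 < h) : x ≤ h * ⌈x / h⌉ :=
  (div_le_iff₀' hh).mp (Int.le_ceil _)

lemma Int.mul_ceil_div_lt_add (x : ℝ) {h : ℝ} (hh : 0 < h) : h * ⌈x / h⌉ < x + h := by
  have := Int.ceil_lt_add_one (x / h)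
  rwa [div_add_one hh.ne', lt_div_iff₀' hh] at this

/-- `F(h) / G_c`. -/
noncomputable def eeEnergy (a h : ℝ) : ℝ :=
  h * (1 + (⌈2 * a / h⌉ : ℝ) + √(π * (⌈2 * a / h⌉ : ℝ)))

lemma abs_eeEnergy_sub_le (a : ℝ) {h : ℝ} (hh : 0 < h) :
    |eeEnergy a h - (2 * a + √(2 * π * a) * √h)| ≤ 4 * h := by
  set n : ℝ := (⌈2 * a / h⌉ : ℝ)
  have hlo : 2 * a ≤ h * n := Int.le_mul_ceil_div _ hh
  have hhi : h * n < 2 * a + h := Int.mul_ceil_div_lt_add _ hh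
  have hsqrt_n : h * √(π * n) = √(π * h * (h * n)) := by
    rw [show π * h * (h * n) = h ^ 2 * (π * n) by ring, sqrt_mul (sq_nonneg h),
      sqrt_sq hh.le]
  have hsqrt_a : √(2 * π * a) * √h = √(π * h * (2 * a)) := by
    rw [← sqrt_mul' _ hh.le]; ring_nf
  have hmono : √(π * h * (2 * a)) ≤ √(π * h * (h * n)) := by
    gcongr
  have hgap : √(π * h * (h * n)) - √(π * h * (2 * a)) ≤ 2 * h :=
    calc √(π * h * (h * n)) - √(π * h * (2 * a))
        ≤ √(π * h * (h * n) - π * h * (2 * a)) := sqrt_sub_sqrt_le_sqrt_sub (by gcongr)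
      _ ≤ √((2 * h) ^ 2) := by
        gcongr
        nlinarith [pi_le_four, pi_pos, mul_pos pi_pos hh]
      _ = 2 * h := sqrt_sq (by positivity)
  rw [eeEnergy, mul_add, hsqrt_n, hsqrt_a, abs_le]
  constructor <;> linarith

lemma abs_richardson_sub_le {f : ℝ → ℝ} {L c K lam : ℝ} (hlam : lam + (1 - lam) * √2 = 0)
    (hf : ∀ h, 0 < h → |f h - (L + c * √h)| ≤ K * h) {h : ℝ} (hh : 0 < h) :
    |lam * f h + (1 - lam) * f (2 * h) - L| ≤ (|lam| + 2 * |1 - lam|) * K * h := by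
  have hcancel : lam * (c * √h) + (1 - lam) * (c * √(2 * h)) = 0 := by
    rw [sqrt_mul zero_le_two]
    linear_combination c * √h * hlam
  calc |lam * f h + (1 - lam) * f (2 * h) - L|
      = |lam * (f h - (L + c * √h)) + (1 - lam) * (f (2 * h) - (L + c * √(2 * h)))| := by
        congr 1; linear_combination hcancel
    _ ≤ |lam| * (K * h) + |1 - lam| * (K * (2 * h)) := by
        grw [abs_add_le, abs_mul, abs_mul, hf h hh, hf (2 * h) (by positivity)]
    _ = (|lam| + 2 * |1 - lam|) * K * h := by ring

lemma sqrt_two_div_sqrt_two_sub_one : √2 / (√2 - 1) = 2 + √2 := by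
  have h1 : 1 < √2 := by simpa using sqrt_lt_sqrt zero_le_one one_lt_two
  rw [div_eq_iff (by linarith)]
  nlinarith [sq_sqrt (zero_le_two (α := ℝ))]

theorem richardson_extrapolation_general (a Gc : ℝ) (hGc : 0 < Gc)
    (F : ℝ → ℝ)
    (hF : ∀ h : ℝ, F h =
      Gc * h * (1 + (⌈2 * a / h⌉ : ℝ) + Real.sqrt (Real.pi * (⌈2 * a / h⌉ : ℝ))))
    (lam : ℝ) (hlam : lam = Real.sqrt 2 / (Real.sqrt 2 - 1)) :
    ∃ C > (0 : ℝ), ∃ h₀ > (0 : ℝ), ∀ h : ℝ, 0 < h → h ≤ h₀ →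
      |lam * F h + (1 - lam) * F (2 * h) - 2 * a * Gc| ≤ C * h := by
  rw [sqrt_two_div_sqrt_two_sub_one] at hlam
  have hsqrt2 : √2 ^ 2 = 2 := sq_sqrt zero_le_two
  have hweights : lam + (1 - lam) * √2 = 0 := by
    rw [hlam]; linear_combination -hsqrt2
  have hweight_bound : |lam| + 2 * |1 - lam| ≤ 9 := by
    have : √2 < 3 / 2 := by nlinarith [sqrt_nonneg 2]
    rw [hlam, abs_of_pos (by positivity), abs_of_neg (by linarith [sqrt_nonneg 2])]
    linarith
  refine ⟨36 * Gc, by positivity, 1, one_pos, fun h hh _ => ?_⟩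
  have hE := abs_richardson_sub_le hweights (fun h hh => abs_eeEnergy_sub_le a hh) hh
  calc |lam * F h + (1 - lam) * F (2 * h) - 2 * a * Gc|
      = |Gc * (lam * eeEnergy a h + (1 - lam) * eeEnergy a (2 * h) - 2 * a)| := by
        simp only [hF, eeEnergy]; ring_nf
    _ = Gc * |lam * eeEnergy a h + (1 - lam) * eeEnergy a (2 * h) - 2 * a| := by
        rw [abs_mul, abs_of_pos hGc]
    _ ≤ Gc * (9 * 4 * h) := by
        gcongr
        exact hE.trans (by gcongr)
    _ = 36 * Gc * h := by ring

/-- Richardson extrapolation with weight `λ = √2/(√2−1)` of the optimal EE fracture energy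
`F(h) = G_c h (1 + ⌈2a/h⌉ + √(π⌈2a/h⌉))` satisfies
`λ F(h) + (1−λ) F(2h) = 2a·G_c + O(h)` as `h → 0`. -/
theorem richardson_extrapolation (a Gc : ℝ) (ha : 0 < a) (hGc : 0 < Gc)
    (F : ℝ → ℝ)
    (hF : ∀ h : ℝ, F h =
      Gc * h * (1 + (⌈2 * a / h⌉ : ℝ) + Real.sqrt (Real.pi * (⌈2 * a / h⌉ : ℝ))))
    (lam : ℝ) (hlam : lam = Real.sqrt 2 / (Real.sqrt 2 - 1)) :
    ∃ C > (0 : ℝ), ∃ h₀ > (0 : ℝ), ∀ h : ℝ, 0 < h → h ≤ h₀ →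
      |lam * F h + (1 - lam) * F (2 * h) - 2 * a * Gc| ≤ C * h :=
  richardson_extrapolation_general a Gc hGc F hF lam hlam
end

section
/- Let a > 0 and G_c > 0, define F(h) = G_c·h·(1 + ⌈2a/h⌉ + √(π·⌈2a/h⌉)) for h > 0, and let λ be a real number with λ ≠ √2/(√2 − 1). Then the combination λ·F(h) + (1 − λ)·F(2h) − 2a·G_c is NOT O(h) as h → 0⁺: for every C > 0 and every h₀ > 0 there exists h ∈ (0, h₀] with |λ·F(h) + (1 − λ)·F(2h) − 2a·G_c| > C·h. Hence λ = √2/(√2 − 1) is the unique extrapolation weight that cancels the O(h^{1/2}) error term. -/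
set_option maxHeartbeats 1000000 in
/-- For any extrapolation weight `λ ≠ √2/(√2−1)`, the combination
`λ F(h) + (1−λ) F(2h) − 2a·G_c` is NOT `O(h)` as `h → 0⁺`, where
`F(h) = G_c h (1 + ⌈2a/h⌉ + √(π⌈2a/h⌉))`. -/
theorem richardson_weight_unique (a Gc : ℝ) (ha : 0 < a) (hGc : 0 < Gc)
    (F : ℝ → ℝ)
    (hF : ∀ h : ℝ, F h =
      Gc * h * (1 + (⌈2 * a / h⌉ : ℝ) + Real.sqrt (Real.pi * (⌈2 * a / h⌉ : ℝ))))
    (lam : ℝ) (hlam : lam ≠ Real.sqrt 2 / (Real.sqrt 2 - 1)) :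
    ∀ C > (0 : ℝ), ∀ h₀ > (0 : ℝ), ∃ h : ℝ, 0 < h ∧ h ≤ h₀ ∧
      C * h < |lam * F h + (1 - lam) * F (2 * h) - 2 * a * Gc| := by
  intro C hC h₀ hh₀
  have hs2 : Real.sqrt 2 ^ 2 = 2 := Real.sq_sqrt (by norm_num)
  have hs2n : (0:ℝ) ≤ Real.sqrt 2 := Real.sqrt_nonneg 2
  have hs2gt1 : 1 < Real.sqrt 2 := by nlinarith
  have hκ : lam * Real.sqrt 2 + 2 - 2 * lam ≠ 0 := by
    intro h
    apply hlam
    have hden : Real.sqrt 2 - 1 ≠ 0 := by nlinarith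
    rw [eq_div_iff hden]
    nlinarith [h]
  have hK : 0 < |lam * Real.sqrt 2 + 2 - 2 * lam| := abs_pos.mpr hκ
  have hπa : 0 < Real.pi * a := by positivity
  have hsπa : 0 < Real.sqrt (Real.pi * a) := Real.sqrt_pos.mpr hπa
  have hD : 0 < C + Gc * |2 - lam| := by positivity
  have hE : 0 < Gc * |lam * Real.sqrt 2 + 2 - 2 * lam| * Real.sqrt (Real.pi * a)
      / (C + Gc * |2 - lam|) := by positivity
  set E := Gc * |lam * Real.sqrt 2 + 2 - 2 * lam| * Real.sqrt (Real.pi * a)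
      / (C + Gc * |2 - lam|) with hEdef
  obtain ⟨m, hm⟩ := exists_nat_gt (max (a / h₀) (a / E ^ 2))
  have hm1 : a / h₀ < m := lt_of_le_of_lt (le_max_left _ _) hm
  have hm2 : a / E ^ 2 < m := lt_of_le_of_lt (le_max_right _ _) hm
  have hmpos : (0:ℝ) < m := lt_trans (by positivity) hm1
  have hhpos : 0 < a / (m:ℝ) := by positivity
  have hhh₀ : a / (m:ℝ) ≤ h₀ := by
    rw [div_le_iff₀ hmpos]
    rw [div_lt_iff₀ hh₀] at hm1
    linarith
  have hhE : a / (m:ℝ) < E ^ 2 := by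
    rw [div_lt_iff₀ (pow_pos hE 2)] at hm2
    rw [div_lt_iff₀ hmpos]
    nlinarith
  set h := a / (m:ℝ) with hhdef
  have hmh : (m:ℝ) * h = a := by
    rw [hhdef]; field_simp
  clear_value E h
  refine ⟨h, hhpos, hhh₀, ?_⟩
  -- ceiling computations
  have hc1 : (⌈2 * a / h⌉ : ℝ) = 2 * m := by
    have e1 : 2 * a / h = ((2 * m : ℕ) : ℝ) := by
      push_cast
      rw [hhdef]
      field_simp
    rw [e1, Int.ceil_natCast]
    push_cast; ring
  have hc2 : (⌈2 * a / (2 * h)⌉ : ℝ) = m := by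
    have e2 : 2 * a / (2 * h) = ((m : ℕ) : ℝ) := by
      rw [hhdef]; field_simp
    rw [e2, Int.ceil_natCast]
    push_cast; ring
  have hspos : 0 < Real.sqrt (Real.pi * a * h) := Real.sqrt_pos.mpr (by positivity)
  -- sqrt simplifications
  have hsqh : ∀ X : ℝ, h * Real.sqrt X = Real.sqrt (h ^ 2 * X) := by
    intro X
    rw [Real.sqrt_mul (sq_nonneg h), Real.sqrt_sq hhpos.le]
  have hsq1 : h * Real.sqrt (Real.pi * (2 * m)) = Real.sqrt 2 * Real.sqrt (Real.pi * a * h) := by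
    rw [hsqh, show h ^ 2 * (Real.pi * (2 * (m:ℝ))) = 2 * (Real.pi * a * h) by linear_combination (2 * Real.pi * h) * hmh,
      Real.sqrt_mul (by norm_num : (0:ℝ) ≤ 2)]
  have hsq2 : (2 * h) * Real.sqrt (Real.pi * (m:ℝ)) = 2 * Real.sqrt (Real.pi * a * h) := by
    have : (2 * h) * Real.sqrt (Real.pi * (m:ℝ)) = 2 * (h * Real.sqrt (Real.pi * (m:ℝ))) := by ring
    rw [this, hsqh, show h ^ 2 * (Real.pi * (m:ℝ)) = Real.pi * a * h by linear_combination (Real.pi * h) * hmh]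
  -- F values
  have h2a : 2 * (m:ℝ) * h = 2 * a := by linear_combination 2 * hmh
  have hF1 : F h = Gc * (h + 2 * a + Real.sqrt 2 * Real.sqrt (Real.pi * a * h)) := by
    rw [hF h, hc1, ← hsq1]
    linear_combination Gc * h2a
  have hF2 : F (2 * h) = Gc * (2 * h + 2 * a + 2 * Real.sqrt (Real.pi * a * h)) := by
    rw [hF (2*h), hc2, ← hsq2]
    linear_combination Gc * h2a
  have hexpr : lam * F h + (1 - lam) * F (2 * h) - 2 * a * Gc
      = Gc * (2 - lam) * h + Gc * (lam * Real.sqrt 2 + 2 - 2 * lam) * Real.sqrt (Real.pi * a * h) := by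
    rw [hF1, hF2]; ring
  rw [hexpr]
  set s := Real.sqrt (Real.pi * a * h) with hsdef
  set X := Gc * (2 - lam) * h + Gc * (lam * Real.sqrt 2 + 2 - 2 * lam) * s with hXdef
  clear_value s X
  -- bound
  have habs : Gc * |lam * Real.sqrt 2 + 2 - 2 * lam| * s ≤ |X| + Gc * |2 - lam| * h := by
    calc Gc * |lam * Real.sqrt 2 + 2 - 2 * lam| * s
        = |Gc * (lam * Real.sqrt 2 + 2 - 2 * lam) * s| := by
          rw [abs_mul, abs_mul, abs_of_pos hGc, abs_of_pos hspos]
      _ = |X + (-(Gc * (2 - lam) * h))| := by rw [hXdef]; ring_nf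
      _ ≤ |X| + |(-(Gc * (2 - lam) * h))| := abs_add_le _ _
      _ = |X| + Gc * |2 - lam| * h := by
          rw [abs_neg, abs_mul, abs_mul, abs_of_pos hGc, abs_of_pos hhpos]
  have hkey : C * h + Gc * |2 - lam| * h < Gc * |lam * Real.sqrt 2 + 2 - 2 * lam| * s := by
    have hsh : s = Real.sqrt (Real.pi * a) * Real.sqrt h := by
      rw [hsdef, Real.sqrt_mul hπa.le]
    have hrh : Real.sqrt h < E := by
      have := Real.sqrt_lt_sqrt hhpos.le hhE
      rwa [Real.sqrt_sq hE.le] at this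
    have hrhpos : 0 < Real.sqrt h := Real.sqrt_pos.mpr hhpos
    have hh' : h = Real.sqrt h * Real.sqrt h := (Real.mul_self_sqrt hhpos.le).symm
    have hstep : (C + Gc * |2 - lam|) * Real.sqrt h
        < Gc * |lam * Real.sqrt 2 + 2 - 2 * lam| * Real.sqrt (Real.pi * a) := by
      rw [hEdef, lt_div_iff₀ hD] at hrh
      nlinarith [hrh]
    calc C * h + Gc * |2 - lam| * h
        = ((C + Gc * |2 - lam|) * Real.sqrt h) * Real.sqrt h := by
          linear_combination (-(C + Gc * |2 - lam|)) * Real.mul_self_sqrt hhpos.le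
      _ < (Gc * |lam * Real.sqrt 2 + 2 - 2 * lam| * Real.sqrt (Real.pi * a)) * Real.sqrt h :=
          mul_lt_mul_of_pos_right hstep hrhpos
      _ = Gc * |lam * Real.sqrt 2 + 2 - 2 * lam| * s := by rw [hsh]; ring
  linarith
end
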